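/- arXiv:2510.12816 — 3 statements merged into one kernel-verified Lean document; each statement's English description precedes it below -/
import Mathlib

section
/- The α-expectile of a finitely supported real random variable is a non-decreasing function of α: if 0 < α₁ < α₂ < 1, then the α₁-expectile is at most the α₂-expectile. -/
open Finset Filter

noncomputable def eloss {n : ℕ} (p x : Fin n → ℝ) (α m : ℝ) : ℝ :=
  ∑ i, p i * (|α - if x i < m then (1:ℝ) else 0| * (x i - m)^2)

lemma mul_abs_strictMono : StrictMono (fun t : ℝ => t * |t|) := by
  intro a b hab
  simp only
  rcases le_or_gt 0 a with ha | ha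
  · rw [abs_of_nonneg ha, abs_of_nonneg (le_of_lt (lt_of_le_of_lt ha hab))]
    nlinarith
  · rw [abs_of_neg ha]
    rcases le_or_gt 0 b with hb | hb
    · rw [abs_of_nonneg hb]; nlinarith
    · rw [abs_of_neg hb]; nlinarith

lemma eloss_diff {n : ℕ} (p x : Fin n → ℝ) (α₁ α₂ : ℝ) (h0 : 0 < α₁) (h12 : α₁ < α₂)
    (h1 : α₂ < 1) (m : ℝ) :
    eloss p x α₂ m - eloss p x α₁ m
      = (α₂ - α₁) * ∑ i, p i * ((x i - m) * |x i - m|) := by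
  unfold eloss
  rw [← Finset.sum_sub_distrib, Finset.mul_sum]
  apply Finset.sum_congr rfl
  intro i _
  split_ifs with h
  · rw [abs_of_nonpos (by linarith), abs_of_nonpos (by linarith),
      abs_of_nonpos (by linarith)]
    ring
  · push_neg at h
    rw [abs_of_nonneg (by linarith), abs_of_nonneg (by linarith),
      abs_of_nonneg (by linarith)]
    ring

theorem stmt_2 {n : ℕ} (p x : Fin n → ℝ) (hp : ∀ i, 0 < p i) (hsum : ∑ i, p i = 1)
    (α₁ α₂ : ℝ) (h0 : 0 < α₁) (h12 : α₁ < α₂) (h1 : α₂ < 1) (g₁ g₂ : ℝ)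
    (hg₁ : ∀ m, eloss p x α₁ g₁ ≤ eloss p x α₁ m)
    (hg₂ : ∀ m, eloss p x α₂ g₂ ≤ eloss p x α₂ m) :
    g₁ ≤ g₂ := by
  by_contra hlt
  push_neg at hlt
  -- n ≠ 0
  have hn : Nonempty (Fin n) := by
    rcases Nat.eq_zero_or_pos n with h | h
    · subst h; simp at hsum
    · exact ⟨⟨0, h⟩⟩
  have key : eloss p x α₂ g₂ - eloss p x α₁ g₂ ≤ eloss p x α₂ g₁ - eloss p x α₁ g₁ := by
    have h1 := hg₁ g₂
    have h2 := hg₂ g₁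
    linarith
  rw [eloss_diff p x α₁ α₂ h0 h12 h1, eloss_diff p x α₁ α₂ h0 h12 h1] at key
  have hD : ∑ i, p i * ((x i - g₂) * |x i - g₂|) ≤ ∑ i, p i * ((x i - g₁) * |x i - g₁|) :=
    le_of_mul_le_mul_left (by linarith) (by linarith : (0:ℝ) < α₂ - α₁)
  have hDlt : ∑ i, p i * ((x i - g₁) * |x i - g₁|)
      < ∑ i, p i * ((x i - g₂) * |x i - g₂|) := by
    apply Finset.sum_lt_sum_of_nonempty (Finset.univ_nonempty)
    intro i _
    exact mul_lt_mul_of_pos_left (mul_abs_strictMono (by linarith : x i - g₁ < x i - g₂)) (hp i)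
  linarith
end

section
/- As α → 1⁻, the α-expectile of a finitely supported real random variable X converges to max X, the maximum value in the support of X. -/
open Finset Filter

theorem stmt_5 {n : ℕ} (p x : Fin (n+1) → ℝ) (hp : ∀ i, 0 < p i) (hsum : ∑ i, p i = 1)
    (g : ℝ → ℝ)
    (hg : ∀ α ∈ Set.Ioo (0:ℝ) 1, ∀ m, eloss p x α (g α) ≤ eloss p x α m) :
    Tendsto g (nhdsWithin 1 (Set.Iio 1)) (nhds (Finset.univ.sup' Finset.univ_nonempty x)) := by
  set M := Finset.univ.sup' Finset.univ_nonempty x with hM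
  obtain ⟨i0, -, hi0⟩ := Finset.exists_mem_eq_sup' Finset.univ_nonempty x
  have hxi0 : x i0 = M := by rw [hM]; exact hi0.symm
  have hxle : ∀ i, x i ≤ M := fun i => Finset.le_sup' x (Finset.mem_univ i)
  -- upper bound: g α ≤ M for all α ∈ (0,1)
  have hA : ∀ α ∈ Set.Ioo (0:ℝ) 1, g α ≤ M := by
    intro α hα
    by_contra h
    push_neg at h
    have h1 := hg α hα M
    have h2 : eloss p x α M < eloss p x α (g α) := by
      unfold eloss
      apply Finset.sum_lt_sum
      · intro i _
        have hxi : x i < g α := lt_of_le_of_lt (hxle i) h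
        have h2' : (0:ℝ) ≤ 1 - α := by linarith [hα.2]
        rw [if_pos hxi]
        have habs1 : |α - (1:ℝ)| = 1 - α := by
          rw [abs_of_neg (by linarith [hα.2] : α - (1:ℝ) < 0)]; ring
        by_cases hc : x i < M
        · rw [if_pos hc, habs1]
          have hsq : (x i - M)^2 ≤ (x i - g α)^2 := by nlinarith
          exact mul_le_mul_of_nonneg_left
            (mul_le_mul_of_nonneg_left hsq h2') (hp i).le
        · rw [if_neg hc, habs1]
          have hxiM : x i = M := le_antisymm (hxle i) (not_lt.mp hc)
          have h0 : (x i - M)^2 = 0 := by rw [hxiM]; ring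
          rw [h0, mul_zero, mul_zero]
          exact mul_nonneg (hp i).le (mul_nonneg h2' (sq_nonneg _))
      · refine ⟨i0, Finset.mem_univ i0, ?_⟩
        have hxi : x i0 < g α := lt_of_le_of_lt (hxle i0) h
        rw [if_pos hxi]
        have hc : ¬ x i0 < M := by rw [hxi0]; exact lt_irrefl M
        rw [if_neg hc]
        have habs1 : |α - (1:ℝ)| = 1 - α := by
          rw [abs_of_neg (by linarith [hα.2] : α - (1:ℝ) < 0)]; ring
        rw [habs1]
        have h0 : (x i0 - M)^2 = 0 := by rw [hxi0]; ring
        rw [h0, mul_zero, mul_zero]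
        have hd : 0 < (x i0 - g α)^2 := by nlinarith
        exact mul_pos (hp i0) (mul_pos (by linarith [hα.2]) hd)
    linarith
  rw [Metric.tendsto_nhds]
  intro ε hε
  set C : ℝ := ∑ i, p i * (x i - M)^2 with hCdef
  have hC0 : 0 ≤ C := Finset.sum_nonneg fun i _ => mul_nonneg (hp i).le (sq_nonneg _)
  have hPε : 0 < p i0 * ε^2 := mul_pos (hp i0) (pow_pos hε 2)
  have hden : 0 < C + p i0 * ε^2 := by linarith
  set c : ℝ := C / (C + p i0 * ε^2) with hcdef
  have hc1 : c < 1 := (div_lt_one hden).mpr (by linarith)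
  have hc0 : 0 ≤ c := div_nonneg hC0 hden.le
  filter_upwards [Ioo_mem_nhdsLT_of_mem (show (1:ℝ) ∈ Set.Ioc c 1 from ⟨hc1, le_refl 1⟩)]
    with α hα
  have hα01 : α ∈ Set.Ioo (0:ℝ) 1 := ⟨lt_of_le_of_lt hc0 hα.1, hα.2⟩
  have hgle : g α ≤ M := hA α hα01
  rw [Real.dist_eq, abs_of_nonpos (by linarith : g α - M ≤ 0)]
  by_contra hcon
  push_neg at hcon
  have hεle : ε ≤ M - g α := by linarith
  -- lower bound on eloss at g α
  have hlow : α * (p i0 * ε^2) ≤ eloss p x α (g α) := by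
    have hterm : α * (p i0 * ε^2) ≤
        p i0 * (|α - if x i0 < g α then (1:ℝ) else 0| * (x i0 - g α)^2) := by
      have hc' : ¬ x i0 < g α := by rw [hxi0]; linarith
      rw [if_neg hc', sub_zero, abs_of_pos hα01.1]
      have hsq : ε^2 ≤ (x i0 - g α)^2 := by rw [hxi0]; nlinarith
      have h4 := mul_le_mul_of_nonneg_left hsq (mul_nonneg (hp i0).le hα01.1.le)
      nlinarith [h4]
    calc α * (p i0 * ε^2)
        ≤ p i0 * (|α - if x i0 < g α then (1:ℝ) else 0| * (x i0 - g α)^2) := hterm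
      _ ≤ eloss p x α (g α) := by
          apply Finset.single_le_sum (f := fun i =>
            p i * (|α - if x i < g α then (1:ℝ) else 0| * (x i - g α)^2))
            (fun i _ => mul_nonneg (hp i).le (mul_nonneg (abs_nonneg _) (sq_nonneg _)))
            (Finset.mem_univ i0)
  -- upper bound on eloss at M
  have hup : eloss p x α M ≤ (1 - α) * C := by
    unfold eloss
    rw [hCdef, Finset.mul_sum]
    apply Finset.sum_le_sum
    intro i _
    by_cases hc' : x i < M
    · rw [if_pos hc', abs_of_neg (by linarith [hα01.2] : α - (1:ℝ) < 0)]
      exact le_of_eq (by ring)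
    · rw [if_neg hc']
      have hxiM : x i = M := le_antisymm (hxle i) (not_lt.mp hc')
      have h0 : (x i - M)^2 = 0 := by rw [hxiM]; ring
      rw [h0, mul_zero, mul_zero, mul_zero]
  have hmin := hg α hα01 M
  -- contradiction:  (1-α) C < α p i0 ε²
  have hkey : (1 - α) * C < α * (p i0 * ε^2) := by
    have hc' := hα.1
    rw [hcdef, div_lt_iff₀ hden] at hc'
    nlinarith [hc']
  linarith
end

section
/- As α → 0⁺, the α-expectile of a finitely supported real random variable X converges to min X. -/
open Finset Filter

theorem stmt_6 {n : ℕ} (p x : Fin (n+1) → ℝ) (hp : ∀ i, 0 < p i) (hsum : ∑ i, p i = 1)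
    (g : ℝ → ℝ)
    (hg : ∀ α ∈ Set.Ioo (0:ℝ) 1, ∀ m, eloss p x α (g α) ≤ eloss p x α m) :
    Tendsto g (nhdsWithin 0 (Set.Ioi 0)) (nhds (Finset.univ.inf' Finset.univ_nonempty x)) := by
  set mn := Finset.univ.inf' Finset.univ_nonempty x with hmn
  obtain ⟨i₀, -, hi₀⟩ := Finset.exists_mem_eq_inf' Finset.univ_nonempty x
  have hmnle : ∀ i, mn ≤ x i := fun i => Finset.inf'_le _ (Finset.mem_univ i)
  set A := ∑ i, p i * (x i - mn)^2 with hA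
  have hA0 : 0 ≤ A := Finset.sum_nonneg fun i _ => by
    have := (hp i).le; positivity
  have hemn : ∀ α : ℝ, 0 < α → eloss p x α mn = α * A := by
    intro α hα
    simp only [eloss, hA, Finset.mul_sum]
    refine Finset.sum_congr rfl fun i _ => ?_
    rw [if_neg (not_lt.2 (hmnle i)), sub_zero, abs_of_pos hα]
    ring
  have hlb : ∀ α ∈ Set.Ioo (0:ℝ) 1, mn ≤ g α := by
    intro α hα
    by_contra h
    push_neg at h
    have h1 := hg α hα mn
    rw [hemn α hα.1] at h1
    have h2 : eloss p x α (g α) = α * ∑ i, p i * (x i - g α)^2 := by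
      simp only [eloss, Finset.mul_sum]
      refine Finset.sum_congr rfl fun i _ => ?_
      rw [if_neg (not_lt.2 ((h.le.trans (hmnle i)))), sub_zero, abs_of_pos hα.1]
      ring
    have h3 : A < ∑ i, p i * (x i - g α)^2 := by
      apply Finset.sum_lt_sum_of_nonempty Finset.univ_nonempty
      intro i _
      have h4 := hmnle i
      have h5 := hp i
      have hsq : (x i - mn)^2 < (x i - g α)^2 := by
        nlinarith [mul_pos (sub_pos.2 h) (show (0:ℝ) < x i - g α by linarith),
          mul_nonneg (sub_pos.2 h).le (show (0:ℝ) ≤ x i - mn by linarith)]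
      exact mul_lt_mul_of_pos_left hsq h5
    have := mul_lt_mul_of_pos_left h3 hα.1
    linarith
  rw [Metric.tendsto_nhdsWithin_nhds]
  intro ε hε
  have hA1 : (0:ℝ) < A + 1 := by linarith
  have hpi := hp i₀
  refine ⟨min (1/2) (p i₀ * ε^2 / (2*(A+1))), lt_min (by norm_num) (by positivity), ?_⟩
  intro α hαs hd
  rw [Real.dist_eq, sub_zero] at hd
  have hα0 : 0 < α := hαs
  rw [abs_of_pos hα0] at hd
  have hαhalf : α < 1/2 := lt_of_lt_of_le hd (min_le_left _ _)
  have hαsmall : α < p i₀ * ε^2 / (2*(A+1)) := lt_of_lt_of_le hd (min_le_right _ _)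
  have hαmem : α ∈ Set.Ioo (0:ℝ) 1 := ⟨hα0, by linarith⟩
  have hge := hlb α hαmem
  have hup : g α < mn + ε := by
    by_contra h
    push_neg at h
    have h1 := hg α hαmem mn
    rw [hemn α hα0] at h1
    have hterm : p i₀ * (|α - if x i₀ < g α then (1:ℝ) else 0| * (x i₀ - g α)^2)
        ≤ eloss p x α (g α) := by
      apply Finset.single_le_sum (f := fun i =>
        p i * (|α - if x i < g α then (1:ℝ) else 0| * (x i - g α)^2))
        (fun i _ => by have := (hp i).le; positivity) (Finset.mem_univ i₀)
    have hxi : x i₀ = mn := by rw [hmn, hi₀]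
    rw [hxi] at hterm
    rw [if_pos (by linarith : mn < g α)] at hterm
    have habs : |α - 1| = 1 - α := by rw [abs_of_nonpos (by linarith)]; ring
    rw [habs] at hterm
    have hsq : ε^2 ≤ (mn - g α)^2 := by nlinarith
    have h6 : α * (2*(A+1)) < p i₀ * ε^2 := by
      rw [lt_div_iff₀ (by positivity)] at hαsmall; linarith
    nlinarith [mul_le_mul_of_nonneg_left hsq hpi.le,
      mul_nonneg hpi.le (sq_nonneg (mn - g α)), mul_pos hα0 hA1]
  rw [Real.dist_eq, abs_of_nonneg (by linarith)]
  linarith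
end
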